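/- arXiv:1610.00567 — 3 statements merged into one kernel-verified Lean document; each statement's English description precedes it below -/
import Mathlib

section
/- Let G ≤ B(Q_∞), G_0 = π_d(G) and G_1 = π_a(G) where π_d(a,b,c,d)=d, π_a(a,b,c,d)=a. Then G_1 = G_0^m (the image of G_0 under the m-th power map) and #G_1 = #G_0 / gcd(#G_0, m). -/
def hermMul (q : ℕ) {F : Type} [Field F] (s t : F × F × F) : F × F × F :=
  (s.1 * t.1, t.1 * s.2.1 + t.2.1,
    t.1 ^ (q + 1) * s.2.2 + t.1 * t.2.1 ^ q * s.2.1 + t.2.2)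

def hermSet (q : ℕ) (F : Type) [Field F] : Set (F × F × F) :=
  {s | s.1 ≠ 0 ∧ s.2.2 ^ q + s.2.2 = s.2.1 ^ (q + 1)}

def ggkMul (q : ℕ) {F E : Type} [Field F] [Field E] (s t : F × F × F × E) :
    F × F × F × E :=
  (s.1 * t.1, t.1 * s.2.1 + t.2.1,
    t.1 ^ (q + 1) * s.2.2.1 + t.1 * t.2.1 ^ q * s.2.1 + t.2.2.1,
    s.2.2.2 * t.2.2.2)

def ggkSet (q m : ℕ) {F E : Type} [Field F] [Field E] (ι : F →+* E) :
    Set (F × F × F × E) :=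
  {s | s.1 ≠ 0 ∧ s.2.2.1 ^ q + s.2.2.1 = s.2.1 ^ (q + 1) ∧ s.2.2.2 ^ m = ι s.1}

/-- restriction to the Hermitian coordinates: `(a,b,c,d) ↦ (a,b,c)`. -/
def projA {q m : ℕ} {F E : Type} [Field F] [Field E] {ι : F →+* E}
    (x : ggkSet q m ι) : F × F × F :=
  (x.val.1, x.val.2.1, x.val.2.2.1)

/-- the map `π_d : (a,b,c,d) ↦ d`. -/
def projD {q m : ℕ} {F E : Type} [Field F] [Field E] {ι : F →+* E}
    (x : ggkSet q m ι) : E :=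
  x.val.2.2.2

/-- the map `π_a : (a,b,c,d) ↦ a`. -/
def projA0 {q m : ℕ} {F E : Type} [Field F] [Field E] {ι : F →+* E}
    (x : ggkSet q m ι) : F :=
  x.val.1


lemma aux_card_pow_image {E : Type} [Field E] [Fintype E] (H : Subgroup Eˣ) (m : ℕ) :
    Nat.card (Subgroup.map (powMonoidHom m) H) = Nat.card H / Nat.gcd (Nat.card H) m := by
  obtain ⟨⟨g, hgH⟩, hg⟩ := IsCyclic.exists_generator (α := H)
  have hH : H = Subgroup.zpowers g := by
    apply le_antisymm
    · intro y hy
      obtain ⟨k, hk⟩ := hg ⟨y, hy⟩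
      exact ⟨k, by simpa using congrArg Subtype.val hk⟩
    · exact Subgroup.zpowers_le.mpr hgH
  rw [hH, MonoidHom.map_zpowers, Nat.card_zpowers, Nat.card_zpowers, powMonoidHom_apply,
    orderOf_pow]

theorem stmt9 (p h q n m : ℕ) (hp : p.Prime) (hh : 0 < h) (hq : q = p ^ h)
    (hn : Odd n) (hn1 : 1 ≤ n) (hm : m * (q + 1) = q ^ n + 1)
    (F E : Type) [Field F] [Fintype F] [CharP F p] [Field E] [Fintype E] [CharP E p]
    (hF : Fintype.card F = q ^ 2) (hE : Fintype.card E = q ^ (2 * n)) (ι : F →+* E)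
    [instB : Group (ggkSet q m ι)]
    (hmulB : ∀ s t : ggkSet q m ι, (s * t).val = ggkMul q s.val t.val)
    (G : Subgroup ↥(ggkSet q m ι)) :
    ι '' (projA0 '' (G : Set ↥(ggkSet q m ι))) =
        (fun d : E => d ^ m) '' (projD '' (G : Set ↥(ggkSet q m ι))) ∧
      Nat.card (projA0 '' (G : Set ↥(ggkSet q m ι))) =
        Nat.card (projD '' (G : Set ↥(ggkSet q m ι))) /
          Nat.gcd (Nat.card (projD '' (G : Set ↥(ggkSet q m ι)))) m := by
  have hm0 : m ≠ 0 := by rintro rfl; simp at hm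
  have hι : Function.Injective ι := ι.injective
  have key : ∀ x : ggkSet q m ι, (projD x) ^ m = ι (projA0 x) := fun x => x.2.2.2
  have hdne : ∀ x : ggkSet q m ι, projD x ≠ 0 := by
    intro x hx
    have hk := key x
    rw [hx, zero_pow hm0] at hk
    exact x.2.1 (hι (by rw [map_zero]; exact hk.symm))
  have hone : projD (1 : ggkSet q m ι) = 1 := by
    have h1 := hmulB 1 1
    rw [mul_one] at h1
    have h2 : projD (1 : ggkSet q m ι) = projD 1 * projD 1 :=
      congrArg (fun s : _ × _ × _ × E => s.2.2.2) h1
    exact mul_left_cancel₀ (hdne 1) (h2.symm.trans (mul_one _).symm)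
  let ψ : ↥(ggkSet q m ι) →* Eˣ :=
    { toFun := fun x => Units.mk0 (projD x) (hdne x)
      map_one' := Units.ext hone
      map_mul' := fun s t => Units.ext (by
        have h2 : projD (s * t) = s.val.2.2.2 * t.val.2.2.2 :=
          congrArg (fun s : _ × _ × _ × E => s.2.2.2) (hmulB s t)
        simpa [projD] using h2) }
  set H : Subgroup Eˣ := Subgroup.map ψ G with hHdef
  have hDset : projD '' (G : Set ↥(ggkSet q m ι)) = Units.val '' (H : Set Eˣ) := by
    rw [hHdef, Subgroup.coe_map, Set.image_image]
    rfl
  have hpow : (fun d : E => d ^ m) '' (projD '' (G : Set ↥(ggkSet q m ι))) =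
      Units.val '' ((Subgroup.map (powMonoidHom m) H : Subgroup Eˣ) : Set Eˣ) := by
    calc (fun d : E => d ^ m) '' (projD '' (G : Set ↥(ggkSet q m ι)))
        = (fun d : E => d ^ m) '' (Units.val '' (H : Set Eˣ)) := by rw [hDset]
      _ = Units.val '' ((powMonoidHom m) '' (H : Set Eˣ)) := by
          rw [Set.image_image, Set.image_image]
          apply Set.image_congr
          intro a _
          simp [powMonoidHom_apply]
      _ = Units.val '' ((Subgroup.map (powMonoidHom m) H : Subgroup Eˣ) : Set Eˣ) := by
          simp only [hHdef, Subgroup.coe_map]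
  have part1 : ι '' (projA0 '' (G : Set ↥(ggkSet q m ι))) =
      (fun d : E => d ^ m) '' (projD '' (G : Set ↥(ggkSet q m ι))) := by
    rw [Set.image_image, Set.image_image]
    exact Set.image_congr fun x _ => (key x).symm
  refine ⟨part1, ?_⟩
  have c1 : Nat.card (projA0 '' (G : Set ↥(ggkSet q m ι))) =
      Nat.card ((fun d : E => d ^ m) '' (projD '' (G : Set ↥(ggkSet q m ι)))) := by
    rw [← part1]
    exact (Nat.card_image_of_injective hι _).symm
  have c2 : Nat.card (projD '' (G : Set ↥(ggkSet q m ι))) = Nat.card H := by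
    rw [hDset]
    exact Nat.card_image_of_injective Units.val_injective _
  have c3 : Nat.card ((fun d : E => d ^ m) '' (projD '' (G : Set ↥(ggkSet q m ι)))) =
      Nat.card (Subgroup.map (powMonoidHom m) H) := by
    rw [hpow]
    exact Nat.card_image_of_injective Units.val_injective _
  rw [c1, c3, c2, aux_card_pow_image]
end

section
/- Let Σ be the set of pairs (H, M) with H ≤ A(P_∞), M ≤ μ, and M^m = φ(H), where φ(a,b,c) = a and μ is the group of (q^n+1)(q−1)-th roots of unity in 𝔽_{q^{2n}}*. Then the map Ξ(G) = (π(G), π_d(G)) is a bijection from the set of subgroups of B(Q_∞) onto Σ. -/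
/-- `H` is (the carrier of) a subgroup of `A(P_∞)` -/
def subgroupSetA (q : ℕ) (F : Type) [Field F] (H : Set (F × F × F)) : Prop :=
  H ⊆ hermSet q F ∧ ((1 : F), (0 : F), (0 : F)) ∈ H ∧
    (∀ s ∈ H, ∀ t ∈ H, hermMul q s t ∈ H) ∧
    ∀ s ∈ H, ∃ t ∈ H, hermMul q s t = ((1 : F), (0 : F), (0 : F))

/-- `M` is a subgroup of the group `μ` of `N`-th roots of unity -/
def subgroupSetMu (N : ℕ) (E : Type) [Field E] (M : Set E) : Prop :=
  (∀ d ∈ M, d ^ N = 1) ∧ (1 : E) ∈ M ∧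
    (∀ d ∈ M, ∀ e ∈ M, d * e ∈ M) ∧ ∀ d ∈ M, d⁻¹ ∈ M


/-
Both projections are multiplicative, so the images of a subgroup are subgroups, and the
defining relation `d ^ m = ι a` makes them compatible. The point is that a subgroup `G` is
recovered from its two images. If `x` agrees with `x' ∈ G` in `(a, b, c)` and with `x'' ∈ G` in
`d`, then `z = x'⁻¹ * x''` lies in `G` and has `a = 1`. Its `(b, c)`-part has order dividing
`p ^ 2`, and its `d`-part has order dividing `m`, which is prime to `p`. So for
`K = p ^ (2 * φ m)` the power `z ^ K` is `(1, 0, 0, d_z)`, and `x = x' * z ^ K ∈ G`.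
Conversely, a compatible pair `(H, M)` is the image of `{x | π x ∈ H ∧ π_d x ∈ M}`.
-/

theorem Nat.coprime_of_mul_eq_pow_add_one {q n m k : ℕ} (hn : n ≠ 0) (h : m * k = q ^ n + 1) :
    q.Coprime m := by
  have hq : q.Coprime (q ^ n + 1) := by
    rw [← pow_sub_one_mul hn, Nat.coprime_mul_right_add_right]
    exact Nat.coprime_one_right q
  exact hq.coprime_dvd_right ⟨k, h.symm⟩

theorem hermMul_left_cancel {q : ℕ} {F : Type} [Field F] {s t t' : F × F × F} (hs : s.1 ≠ 0)
    (h : hermMul q s t = hermMul q s t') : t = t' := by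
  simp only [hermMul, Prod.mk.injEq] at h
  obtain ⟨h1, h2, h3⟩ := h
  have e1 : t.1 = t'.1 := mul_left_cancel₀ hs h1
  rw [e1] at h2 h3
  have e2 : t.2.1 = t'.2.1 := add_left_cancel h2
  rw [e2] at h3
  exact Prod.ext e1 (Prod.ext e2 (add_left_cancel h3))

section

variable {q m : ℕ} {F E : Type} [Field F] [Field E] {ι : F →+* E}

theorem projA0_eq_of_projD_eq {x y : ggkSet q m ι} (h : projD x = projD y) :
    projA0 x = projA0 y :=
  ι.injective <| x.2.2.2.symm.trans <| (congrArg (· ^ m) h).trans y.2.2.2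

theorem image_pow_image_projD (S : Set (ggkSet q m ι)) :
    (fun d : E => d ^ m) '' (projD '' S) = (fun s : F × F × F => ι s.1) '' (projA '' S) := by
  simp only [Set.image_image]
  exact Set.image_congr fun x _ => x.2.2.2

theorem projD_pow_mul_card_sub_one [Fintype F] (x : ggkSet q m ι) :
    projD x ^ (m * (Fintype.card F - 1)) = 1 := by
  rw [pow_mul, projD, x.2.2.2, ← map_pow, FiniteField.pow_card_sub_one_eq_one _ x.2.1, map_one]

variable [Group (ggkSet q m ι)] (hmul : ∀ s t : ggkSet q m ι, (s * t).val = ggkMul q s.val t.val)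
include hmul

theorem val_one (hm0 : m ≠ 0) : (1 : ggkSet q m ι).val = (1, 0, 0, 1) := by
  have h := hmul 1 1
  rw [one_mul] at h
  obtain ⟨ha, -, hd⟩ := (1 : ggkSet q m ι).2
  generalize (1 : ggkSet q m ι).val = e at h ha hd ⊢
  obtain ⟨a, b, c, d⟩ := e
  simp only [ggkMul, Prod.mk.injEq] at h ha hd ⊢
  obtain ⟨h1, h2, h3, h4⟩ := h
  have ha1 : a = 1 := by simpa [ha] using h1
  subst ha1
  have hb0 : b = 0 := by simpa using h2
  subst hb0
  have hd0 : d ≠ 0 := by rintro rfl; simp [hm0] at hd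
  refine ⟨rfl, rfl, ?_, ?_⟩
  · simpa using h3
  · simpa [hd0] using h4

theorem projA_mul (x y : ggkSet q m ι) : projA (x * y) = hermMul q (projA x) (projA y) := by
  simp only [projA, hmul, ggkMul, hermMul]

theorem projA0_mul (x y : ggkSet q m ι) : projA0 (x * y) = projA0 x * projA0 y := by
  simp only [projA0, hmul, ggkMul]

theorem projD_mul (x y : ggkSet q m ι) : projD (x * y) = projD x * projD y := by
  simp only [projD, hmul, ggkMul]

theorem projA_one (hm0 : m ≠ 0) : projA (1 : ggkSet q m ι) = (1, 0, 0) := by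
  simp only [projA, val_one hmul hm0]

theorem projA0_one (hm0 : m ≠ 0) : projA0 (1 : ggkSet q m ι) = 1 := by
  simp only [projA0, val_one hmul hm0]

theorem projD_one (hm0 : m ≠ 0) : projD (1 : ggkSet q m ι) = 1 := by
  simp only [projD, val_one hmul hm0]

theorem projD_inv (hm0 : m ≠ 0) (x : ggkSet q m ι) : projD x⁻¹ = (projD x)⁻¹ :=
  eq_inv_of_mul_eq_one_right <| by rw [← projD_mul hmul, mul_inv_cancel, projD_one hmul hm0]

theorem hermMul_projA_projA_inv (hm0 : m ≠ 0) (x : ggkSet q m ι) :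
    hermMul q (projA x) (projA x⁻¹) = (1, 0, 0) := by
  rw [← projA_mul hmul, mul_inv_cancel, projA_one hmul hm0]

theorem val_pow_of_projA0_eq_one (hm0 : m ≠ 0) {z : ggkSet q m ι} (hz : projA0 z = 1) (k : ℕ) :
    (z ^ k).val = (1, k * z.val.2.1,
      k * z.val.2.2.1 + k.choose 2 * z.val.2.1 ^ (q + 1), z.val.2.2.2 ^ k) := by
  induction k with
  | zero => simp [val_one hmul hm0]
  | succ k ih =>
    rw [pow_succ, hmul, ih]
    simp only [projA0] at hz
    simp only [ggkMul, hz, Nat.choose_succ_succ, Nat.choose_one_right]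
    push_cast
    refine Prod.ext (by simp) (Prod.ext (by ring) (Prod.ext (by ring) (by ring)))

theorem val_pow_eq_of_projA0_eq_one {p : ℕ} (hp : p.Prime) [CharP F p] (hpm : p.Coprime m)
    {z : ggkSet q m ι} (hz : projA0 z = 1) :
    (z ^ (p ^ (2 * m.totient))).val = (1, 0, 0, z.val.2.2.2) := by
  have hm0 : m ≠ 0 := by
    rintro rfl
    exact hp.ne_one (Nat.coprime_zero_right p |>.mp hpm)
  have htot : m.totient ≠ 0 := (Nat.totient_pos.mpr (Nat.pos_of_ne_zero hm0)).ne'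
  have hK : ((p ^ (2 * m.totient) : ℕ) : F) = 0 := by
    rw [Nat.cast_pow, CharP.cast_eq_zero, zero_pow (by omega)]
  have hK_choose : (((p ^ (2 * m.totient)).choose 2 : ℕ) : F) = 0 := by
    refine (CharP.cast_eq_zero_iff F p _).mpr (hp.dvd_choose_pow two_ne_zero fun h => ?_)
    have : p ^ 2 ≤ p ^ (2 * m.totient) := Nat.pow_le_pow_right hp.pos (by omega)
    nlinarith [hp.two_le]
  have hd : z.val.2.2.2 ^ p ^ (2 * m.totient) = z.val.2.2.2 := by
    have hdm : z.val.2.2.2 ^ m = 1 := by rw [z.2.2.2, ← projA0, hz, map_one]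
    have hK1 : p ^ (2 * m.totient) ≡ 1 [MOD m] := by
      rw [pow_mul]
      exact Nat.ModEq.pow_totient (hpm.pow_left 2)
    rw [pow_eq_pow_of_modEq hK1 hdm, pow_one]
  rw [val_pow_of_projA0_eq_one hmul hm0 hz, hK, hK_choose, hd]
  simp

theorem mem_of_projA_eq_of_projD_eq {p : ℕ} (hp : p.Prime) [CharP F p] (hpm : p.Coprime m)
    (hq0 : q ≠ 0) {G : Subgroup (ggkSet q m ι)} {x x' x'' : ggkSet q m ι} (hx' : x' ∈ G)
    (hx'' : x'' ∈ G) (hA : projA x = projA x') (hD : projD x = projD x'') : x ∈ G := by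
  have hm0 : m ≠ 0 := by
    rintro rfl
    exact hp.ne_one (Nat.coprime_zero_right p |>.mp hpm)
  set z := x'⁻¹ * x''
  have hz : projA0 z = 1 := by
    have ha : projA0 x'' = projA0 x' :=
      (projA0_eq_of_projD_eq hD).symm.trans (congrArg (fun s : F × F × F => s.1) hA)
    rw [projA0_mul hmul, ha, ← projA0_mul hmul, inv_mul_cancel, projA0_one hmul hm0]
  have hdz : projD x' * projD z = projD x := by
    rw [← projD_mul hmul, mul_inv_cancel_left, hD]
  simp only [projD] at hdz
  have hx : x' * z ^ p ^ (2 * m.totient) = x := by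
    apply Subtype.ext
    rw [hmul, val_pow_eq_of_projA0_eq_one hmul hp hpm hz]
    simp only [ggkMul, mul_one, one_mul, add_zero, one_pow, zero_pow hq0, zero_mul, hdz]
    simp only [projA, Prod.mk.injEq] at hA
    rw [← hA.1, ← hA.2.1, ← hA.2.2]
  exact hx ▸ G.mul_mem hx' (G.pow_mem (G.mul_mem (G.inv_mem hx') hx'') _)

theorem subgroup_le_of_image_proj_subset {p : ℕ} (hp : p.Prime) [CharP F p]
    (hpm : p.Coprime m) (hq0 : q ≠ 0) {G G' : Subgroup (ggkSet q m ι)}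
    (hA : projA '' (G : Set (ggkSet q m ι)) ⊆ projA '' (G' : Set (ggkSet q m ι)))
    (hD : projD '' (G : Set (ggkSet q m ι)) ⊆ projD '' (G' : Set (ggkSet q m ι))) : G ≤ G' := by
  intro x hx
  obtain ⟨x', hx', hA'⟩ := hA ⟨x, hx, rfl⟩
  obtain ⟨x'', hx'', hD''⟩ := hD ⟨x, hx, rfl⟩
  exact mem_of_projA_eq_of_projD_eq hmul hp hpm hq0 hx' hx'' hA'.symm hD''.symm

theorem subgroupSetA_image_projA (hm0 : m ≠ 0) (G : Subgroup (ggkSet q m ι)) :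
    subgroupSetA q F (projA '' (G : Set (ggkSet q m ι))) := by
  refine ⟨?_, ⟨1, G.one_mem, projA_one hmul hm0⟩, ?_, ?_⟩
  · rintro _ ⟨x, -, rfl⟩
    exact ⟨x.2.1, x.2.2.1⟩
  · rintro _ ⟨x, hx, rfl⟩ _ ⟨y, hy, rfl⟩
    exact ⟨x * y, G.mul_mem hx hy, projA_mul hmul x y⟩
  · rintro _ ⟨x, hx, rfl⟩
    exact ⟨projA x⁻¹, ⟨x⁻¹, G.inv_mem hx, rfl⟩, hermMul_projA_projA_inv hmul hm0 x⟩

theorem subgroupSetMu_image_projD [Fintype F] (hm0 : m ≠ 0) (G : Subgroup (ggkSet q m ι)) :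
    subgroupSetMu (m * (Fintype.card F - 1)) E (projD '' (G : Set (ggkSet q m ι))) := by
  refine ⟨?_, ⟨1, G.one_mem, projD_one hmul hm0⟩, ?_, ?_⟩
  · rintro _ ⟨x, -, rfl⟩
    exact projD_pow_mul_card_sub_one x
  · rintro _ ⟨x, hx, rfl⟩ _ ⟨y, hy, rfl⟩
    exact ⟨x * y, G.mul_mem hx hy, projD_mul hmul x y⟩
  · rintro _ ⟨x, hx, rfl⟩
    exact ⟨x⁻¹, G.inv_mem hx, projD_inv hmul hm0 x⟩

def subgroupOfProj (hm0 : m ≠ 0) {N : ℕ} {H : Set (F × F × F)} {M : Set E}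
    (hH : subgroupSetA q F H) (hM : subgroupSetMu N E M) : Subgroup (ggkSet q m ι) where
  carrier := {x | projA x ∈ H ∧ projD x ∈ M}
  mul_mem' {x y} hx hy :=
    ⟨projA_mul hmul x y ▸ hH.2.2.1 _ hx.1 _ hy.1, projD_mul hmul x y ▸ hM.2.2.1 _ hx.2 _ hy.2⟩
  one_mem' := ⟨projA_one hmul hm0 ▸ hH.2.1, projD_one hmul hm0 ▸ hM.2.1⟩
  inv_mem' {x} hx := by
    obtain ⟨t, ht, hxt⟩ := hH.2.2.2 _ hx.1
    have hinv : projA x⁻¹ = t :=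
      hermMul_left_cancel x.2.1 ((hermMul_projA_projA_inv hmul hm0 x).trans hxt.symm)
    exact ⟨hinv ▸ ht, projD_inv hmul hm0 x ▸ hM.2.2.2 _ hx.2⟩

variable (hm0 : m ≠ 0) {N : ℕ} {H : Set (F × F × F)} {M : Set E} (hH : subgroupSetA q F H)
  (hM : subgroupSetMu N E M)
  (himg : (fun d : E => d ^ m) '' M = (fun s : F × F × F => ι s.1) '' H)
include himg

theorem image_projA_subgroupOfProj :
    projA '' (subgroupOfProj hmul hm0 hH hM : Set (ggkSet q m ι)) = H := by
  refine (Set.image_subset_iff.mpr fun x hx => hx.1).antisymm fun s hs => ?_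
  obtain ⟨d, hd, hdm⟩ : ι s.1 ∈ (fun d : E => d ^ m) '' M := himg ▸ ⟨s, hs, rfl⟩
  exact ⟨⟨(s.1, s.2.1, s.2.2, d), (hH.1 hs).1, (hH.1 hs).2, hdm⟩, ⟨hs, hd⟩, rfl⟩

theorem image_projD_subgroupOfProj :
    projD '' (subgroupOfProj hmul hm0 hH hM : Set (ggkSet q m ι)) = M := by
  refine (Set.image_subset_iff.mpr fun x hx => hx.2).antisymm fun d hd => ?_
  obtain ⟨s, hs, hsd⟩ : d ^ m ∈ (fun s : F × F × F => ι s.1) '' H := himg ▸ ⟨d, hd, rfl⟩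
  exact ⟨⟨(s.1, s.2.1, s.2.2, d), (hH.1 hs).1, (hH.1 hs).2, hsd.symm⟩, ⟨hs, hd⟩, rfl⟩

end

theorem stmt12_general (p h q n m : ℕ) (hp : p.Prime) (hh : 0 < h) (hq : q = p ^ h)
    (hn1 : 1 ≤ n) (hm : m * (q + 1) = q ^ n + 1)
    (F E : Type) [Field F] [Fintype F] [CharP F p] [Field E]
    (hF : Fintype.card F = q ^ 2) (ι : F →+* E)
    [instB : Group (ggkSet q m ι)]
    (hmulB : ∀ s t : ggkSet q m ι, (s * t).val = ggkMul q s.val t.val) :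
    Set.BijOn
      (fun G : Subgroup ↥(ggkSet q m ι) =>
        ((projA '' (G : Set ↥(ggkSet q m ι)), projD '' (G : Set ↥(ggkSet q m ι))) :
          Set (F × F × F) × Set E))
      Set.univ
      {HM : Set (F × F × F) × Set E |
        subgroupSetA q F HM.1 ∧ subgroupSetMu ((q ^ n + 1) * (q - 1)) E HM.2 ∧
          (fun d : E => d ^ m) '' HM.2 = (fun s : F × F × F => ι s.1) '' HM.1} := by
  have hm0 : m ≠ 0 := by
    rintro rfl
    omega
  have hq0 : q ≠ 0 := hq ▸ pow_ne_zero h hp.ne_zero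
  have hpm : p.Coprime m :=
    (Nat.coprime_of_mul_eq_pow_add_one (by omega) hm).coprime_dvd_left
      (hq ▸ dvd_pow_self p hh.ne')
  have hN : (q ^ n + 1) * (q - 1) = m * (Fintype.card F - 1) := by
    rw [hF, ← hm, mul_assoc, ← Nat.sq_sub_sq, one_pow]
  refine ⟨fun G _ => ⟨subgroupSetA_image_projA hmulB hm0 G,
      hN ▸ subgroupSetMu_image_projD hmulB hm0 G, image_pow_image_projD _⟩,
    fun G _ G' _ hGG' => ?_, ?_⟩
  · obtain ⟨hA, hD⟩ := Prod.mk.inj hGG'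
    exact le_antisymm (subgroup_le_of_image_proj_subset hmulB hp hpm hq0 hA.le hD.le)
      (subgroup_le_of_image_proj_subset hmulB hp hpm hq0 hA.ge hD.ge)
  · rintro ⟨H, M⟩ ⟨hH, hM, himg⟩
    exact ⟨subgroupOfProj hmulB hm0 hH hM, trivial, Prod.ext
      (image_projA_subgroupOfProj hmulB hm0 hH hM himg)
      (image_projD_subgroupOfProj hmulB hm0 hH hM himg)⟩

theorem stmt12 (p h q n m : ℕ) (hp : p.Prime) (hh : 0 < h) (hq : q = p ^ h)
    (hn : Odd n) (hn1 : 1 ≤ n) (hm : m * (q + 1) = q ^ n + 1)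
    (F E : Type) [Field F] [Fintype F] [CharP F p] [Field E] [Fintype E] [CharP E p]
    (hF : Fintype.card F = q ^ 2) (hE : Fintype.card E = q ^ (2 * n)) (ι : F →+* E)
    [instB : Group (ggkSet q m ι)]
    (hmulB : ∀ s t : ggkSet q m ι, (s * t).val = ggkMul q s.val t.val) :
    Set.BijOn
      (fun G : Subgroup ↥(ggkSet q m ι) =>
        ((projA '' (G : Set ↥(ggkSet q m ι)), projD '' (G : Set ↥(ggkSet q m ι))) :
          Set (F × F × F) × Set E))
      Set.univ
      {HM : Set (F × F × F) × Set E |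
        subgroupSetA q F HM.1 ∧ subgroupSetMu ((q ^ n + 1) * (q - 1)) E HM.2 ∧
          (fun d : E => d ^ m) '' HM.2 = (fun s : F × F × F => ι s.1) '' HM.1} :=
  stmt12_general p h q n m hp hh hq hn1 hm F E hF ι (instB := instB) hmulB
end

section
/- In B(Q_∞), for any element of the form (1, b, c, e), its p-th power equals (1, 0, c', e^p) for some c' ∈ 𝔽_{q²}, and consequently its p²-th power equals (1, 0, 0, e^{p²}). -/
/-!
On elements with first coordinate `1` the law reads
`(1,b,c,d)(1,b',c',d') = (1, b + b', c + b'^q b + c', d d')`,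
so the `k`-th power of `(1,b,c,d)` is `(1, k b, *, d^k)`, and the `k`-th power of `(1,0,c,d)`
is `(1, 0, k c, d^k)`. In characteristic `p` the first rule kills `b` at the `p`-th power, and
the second then kills `c` at the `p²`-th power.
-/

theorem ggkMul_of_fst_eq_one (q : ℕ) {F E : Type} [Field F] [Field E] (b c b' c' : F)
    (d d' : E) :
    ggkMul q (1, b, c, d) (1, b', c', d') = (1, b + b', c + b' ^ q * b + c', d * d') := by
  simp only [ggkMul, one_mul, one_pow, add_comm b]

section Powers

variable {G F E : Type} [Monoid G] [Field F] [Field E] {q : ℕ} {v : G → F × F × F × E}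

theorem exists_ggk_pow_eq (hv : ∀ s t, v (s * t) = ggkMul q (v s) (v t)) {g : G} {b c : F}
    {d : E} (hg : v g = (1, b, c, d)) {n : ℕ} (hn : n ≠ 0) :
    ∃ c', v (g ^ n) = (1, n • b, c', d ^ n) := by
  induction n, Nat.one_le_iff_ne_zero.mpr hn using Nat.le_induction with
  | base => exact ⟨c, by rw [pow_one, hg, one_nsmul, pow_one]⟩
  | succ k _ ih =>
    obtain ⟨c', hc'⟩ := ih (by omega)
    exact ⟨_, by rw [pow_succ, hv, hc', hg, ggkMul_of_fst_eq_one, succ_nsmul, pow_succ]⟩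

theorem ggk_pow_eq_of_snd_eq_zero (hv : ∀ s t, v (s * t) = ggkMul q (v s) (v t)) {g : G}
    {c : F} {d : E} (hg : v g = (1, 0, c, d)) {n : ℕ} (hn : n ≠ 0) :
    v (g ^ n) = (1, 0, n • c, d ^ n) := by
  induction n, Nat.one_le_iff_ne_zero.mpr hn using Nat.le_induction with
  | base => rw [pow_one, hg, one_nsmul, pow_one]
  | succ k _ ih =>
    rw [pow_succ, hv, ih (by omega), hg, ggkMul_of_fst_eq_one, succ_nsmul, pow_succ]
    simp

end Powers

theorem stmt15_general (p q m : ℕ) (hp : p.Prime)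
    (F E : Type) [Field F] [CharP F p] [Field E] (ι : F →+* E)
    [instB : Group (ggkSet q m ι)]
    (hmulB : ∀ s t : ggkSet q m ι, (s * t).val = ggkMul q s.val t.val)
    (g : ↥(ggkSet q m ι)) (hg : projA0 g = 1) :
    (∃ c' : F, (g ^ p).val = ((1 : F), (0 : F), c', projD g ^ p)) ∧
      (g ^ (p ^ 2)).val = ((1 : F), (0 : F), (0 : F), projD g ^ (p ^ 2)) := by
  have hpF : ∀ x : F, p • x = 0 := fun x => by rw [nsmul_eq_mul, CharP.cast_eq_zero, zero_mul]
  obtain ⟨c', hc'⟩ := exists_ggk_pow_eq hmulB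
    (show g.val = (1, g.val.2.1, g.val.2.2.1, projD g) from Prod.ext hg rfl) hp.ne_zero
  rw [hpF] at hc'
  refine ⟨⟨c', hc'⟩, ?_⟩
  rw [sq, pow_mul, ggk_pow_eq_of_snd_eq_zero hmulB hc' hp.ne_zero, hpF, ← pow_mul]

theorem stmt15 (p h q n m : ℕ) (hp : p.Prime) (hh : 0 < h) (hq : q = p ^ h)
    (hn : Odd n) (hn1 : 1 ≤ n) (hm : m * (q + 1) = q ^ n + 1)
    (F E : Type) [Field F] [Fintype F] [CharP F p] [Field E] [Fintype E] [CharP E p]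
    (hF : Fintype.card F = q ^ 2) (hE : Fintype.card E = q ^ (2 * n)) (ι : F →+* E)
    [instB : Group (ggkSet q m ι)]
    (hmulB : ∀ s t : ggkSet q m ι, (s * t).val = ggkMul q s.val t.val)
    (g : ↥(ggkSet q m ι)) (hg : projA0 g = 1) :
    (∃ c' : F, (g ^ p).val = ((1 : F), (0 : F), c', projD g ^ p)) ∧
      (g ^ (p ^ 2)).val = ((1 : F), (0 : F), (0 : F), projD g ^ (p ^ 2)) :=
  stmt15_general p q m hp F E ι (instB := instB) hmulB g hg
end
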